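/- Let Y = P^1 × P^1 and let U be the universal extension 0 → O^{⊕2} → U → O(2,−1) → 0 defined by a basis of the 2-dimensional space Ext^1(O(2,−1), O). Then U is an exceptional vector bundle of rank 3, and (O, U) is a strong exceptional pair with Hom(O, U) = H^0(Y, U) two-dimensional and H^j(Y, U) = 0 for j > 0. -/

import Mathlib

open CategoryTheory CategoryTheory.Limits CategoryTheory.Pretriangulated

/-!
Everything is read off the long exact `Hom`-sequences of the triangle
`O ⊞ O → U → O(2,-1) --δ--> (O ⊞ O)[1]`, fed with the exceptionality and semiorthogonality of
`O` and `O(2,-1)`. Universality enters twice. Every class in `Ext^1(O(2,-1), O)` is a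
combination of the components `e₁, e₂` of `δ`, hence factors through `δ`; as `p ≫ δ = 0`, this
kills `Hom(U, O[1])`. And the connecting map `Hom(O ⊞ O, O) → Ext^1(O(2,-1), O)` sends `(c₁, c₂)`
to a combination of `e₁, e₂` whose coefficients vanish only if the `cᵢ` do, which kills
`Hom(U, O)`. Then `Hom(U, U[l]) = 0` follows from `Hom(U, O[l]) = 0 = Hom(U, O(2,-1)[l])`, and
`End U = k` from `Hom(U, O ⊞ O) = 0` and `End O(2,-1) = k`.
-/

lemma LinearIndependent.pair_of_existsUnique {K V : Type*} [Field K] [AddCommGroup V]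
    [Module K V] {x y : V} (h : ∀ v : V, ∃! c : K × K, v = c.1 • x + c.2 • y) :
    LinearIndependent K ![x, y] :=
  LinearIndependent.pair_iff.2 fun s t hst => by
    obtain ⟨c, -, hc⟩ := h 0
    simpa using (hc (s, t) hst.symm).trans (hc (0, 0) (by simp)).symm

namespace CategoryTheory

section Preadditive

variable {C : Type*} [Category C] [Preadditive C] [HasBinaryBiproducts C]

lemma subsingleton_biprod_hom {X Y W : C} (hX : Subsingleton (X ⟶ W))
    (hY : Subsingleton (Y ⟶ W)) : Subsingleton (X ⊞ Y ⟶ W) :=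
  ⟨fun _ _ => biprod.hom_ext' _ _ (Subsingleton.elim _ _) (Subsingleton.elim _ _)⟩

lemma subsingleton_hom_biprod {X Y W : C} (hX : Subsingleton (W ⟶ X))
    (hY : Subsingleton (W ⟶ Y)) : Subsingleton (W ⟶ X ⊞ Y) :=
  ⟨fun _ _ => biprod.hom_ext _ _ (Subsingleton.elim _ _) (Subsingleton.elim _ _)⟩

end Preadditive

section Shift

variable {C : Type*} [Category C] [HasShift C ℤ]

lemma subsingleton_hom_shift_iff (X Y : C) (n : ℤ) :
    Subsingleton (X ⟶ Y⟦n⟧) ↔ Subsingleton (X⟦-n⟧ ⟶ Y) :=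
  ((shiftEquiv' C (-n) n (neg_add_cancel n)).toAdjunction.homEquiv X Y).subsingleton_congr.symm

lemma subsingleton_hom_shift_zero_iff (X Y : C) :
    Subsingleton (X ⟶ Y⟦(0 : ℤ)⟧) ↔ Subsingleton (X ⟶ Y) :=
  ((Iso.refl X).homCongr ((shiftFunctorZero C ℤ).app Y)).subsingleton_congr

lemma subsingleton_hom_shift_biprod [Preadditive C] [HasBinaryBiproducts C] {X Y W : C} {n : ℤ}
    (hX : Subsingleton (W ⟶ X⟦n⟧)) (hY : Subsingleton (W ⟶ Y⟦n⟧)) :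
    Subsingleton (W ⟶ (X ⊞ Y)⟦n⟧) := by
  rw [subsingleton_hom_shift_iff] at hX hY ⊢
  exact subsingleton_hom_biprod hX hY

variable {k : Type*} [Field k] [Preadditive C] [Linear k C]

-- The shift functors are not assumed `k`-linear, so `(c • 𝟙 Y)⟦n⟧'` need not be `c • 𝟙`;
-- still, when `End X = k`, it acts on `X ⟶ Y⟦n⟧` through a scalar.
lemma exists_comp_shift_map_smul_id_eq_smul {X : C}
    (hX : ∀ f : X ⟶ X, ∃ c : k, f = c • 𝟙 X) (n : ℤ) (c : k) :
    ∃ ρ : k, ∀ (Y : C) (e : X ⟶ Y⟦n⟧), e ≫ (c • 𝟙 Y)⟦n⟧' = ρ • e := by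
  let E := shiftEquiv' C (-n) n (neg_add_cancel n)
  obtain ⟨ρ, hρ⟩ := hX (E.functor.preimage (c • 𝟙 _))
  refine ⟨ρ, fun Y e => ?_⟩
  obtain ⟨e, rfl⟩ := (E.toAdjunction.homEquiv X Y).surjective e
  have : e ≫ (c • 𝟙 Y) = E.functor.map (ρ • 𝟙 X) ≫ e := by
    rw [← hρ, Functor.map_preimage, Linear.comp_smul, Linear.smul_comp, Category.comp_id,
      Category.id_comp]
  change E.toAdjunction.homEquiv X Y e ≫ E.inverse.map (c • 𝟙 Y) = _
  rw [← E.toAdjunction.homEquiv_naturality_right, this, E.toAdjunction.homEquiv_naturality_left,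
    Linear.smul_comp, Category.id_comp]
  rfl

lemma eq_zero_of_comp_shift_map_smul_id_eq_zero {X Y : C} {n : ℤ} {e : X ⟶ Y⟦n⟧} (he : e ≠ 0)
    {c : k} (hc : e ≫ (c • 𝟙 Y)⟦n⟧' = 0) : c = 0 := by
  by_contra hc₀
  have : IsIso (c • 𝟙 Y) := ⟨c⁻¹ • 𝟙 Y, by simp [smul_smul, hc₀], by simp [smul_smul, hc₀]⟩
  exact he ((cancel_mono ((c • 𝟙 Y)⟦n⟧')).1 (by rw [hc, zero_comp]))

end Shift

section Linear

variable {k : Type*} [Field k] {C : Type*} [Category C] [Preadditive C] [Linear k C]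

lemma id_ne_zero_of_existsUnique_eq_smul_id {X : C}
    (hX : ∀ f : X ⟶ X, ∃! c : k, f = c • 𝟙 X) : 𝟙 X ≠ 0 := by
  intro h
  obtain ⟨c, -, hc⟩ := hX 0
  exact zero_ne_one ((hc 0 (zero_smul k _).symm).trans (hc 1 (by simp [h])).symm)

lemma finrank_end_eq_one {X : C} (hX : ∀ f : X ⟶ X, ∃! c : k, f = c • 𝟙 X) :
    Module.finrank k (X ⟶ X) = 1 :=
  (finrank_eq_one_iff_of_nonzero' _ (id_ne_zero_of_existsUnique_eq_smul_id hX)).2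
    fun f => (hX f).exists.imp fun _ h => h.symm

end Linear

section Biprod

variable (k : Type*) [Field k] {C : Type*} [Category C] [Preadditive C] [Linear k C]
  [HasBinaryBiproducts C]

noncomputable def Linear.homBiprodEquiv (W X Y : C) :
    (W ⟶ X ⊞ Y) ≃ₗ[k] (W ⟶ X) × (W ⟶ Y) :=
  { (Linear.rightComp k W biprod.fst).prod (Linear.rightComp k W biprod.snd) with
    invFun := fun g => biprod.lift g.1 g.2
    left_inv := fun f => by ext <;> simp
    right_inv := fun g => by simp }

lemma Linear.finrank_hom_biprod (W X Y : C) [FiniteDimensional k (W ⟶ X)]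
    [FiniteDimensional k (W ⟶ Y)] :
    Module.finrank k (W ⟶ X ⊞ Y) = Module.finrank k (W ⟶ X) + Module.finrank k (W ⟶ Y) := by
  rw [(Linear.homBiprodEquiv k W X Y).finrank_eq, Module.finrank_prod]

end Biprod

section Triangulated

variable {C : Type*} [Category C] [Preadditive C] [HasZeroObject C] [HasShift C ℤ]
  [∀ n : ℤ, (CategoryTheory.shiftFunctor C n).Additive] [Pretriangulated C] {Tr : Triangle C}

lemma Pretriangulated.Triangle.subsingleton_obj₂_hom (hT : Tr ∈ distTriang C) {W : C}
    (h₁ : Subsingleton (Tr.obj₁ ⟶ W)) (h₃ : Subsingleton (Tr.obj₃ ⟶ W)) :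
    Subsingleton (Tr.obj₂ ⟶ W) :=
  subsingleton_of_forall_eq 0 fun f => by
    obtain ⟨g, rfl⟩ := Tr.yoneda_exact₂ hT f (Subsingleton.elim _ _)
    rw [Subsingleton.elim g 0, comp_zero]

lemma Pretriangulated.Triangle.subsingleton_hom_obj₂ (hT : Tr ∈ distTriang C) {W : C}
    (h₁ : Subsingleton (W ⟶ Tr.obj₁)) (h₃ : Subsingleton (W ⟶ Tr.obj₃)) :
    Subsingleton (W ⟶ Tr.obj₂) :=
  subsingleton_of_forall_eq 0 fun f => by
    obtain ⟨g, rfl⟩ := Tr.coyoneda_exact₂ hT f (Subsingleton.elim _ _)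
    rw [Subsingleton.elim g 0, zero_comp]

lemma Pretriangulated.Triangle.subsingleton_hom_shift_obj₂ (hT : Tr ∈ distTriang C) {W : C} {n : ℤ}
    (h₁ : Subsingleton (W ⟶ Tr.obj₁⟦n⟧)) (h₃ : Subsingleton (W ⟶ Tr.obj₃⟦n⟧)) :
    Subsingleton (W ⟶ Tr.obj₂⟦n⟧) := by
  rw [subsingleton_hom_shift_iff] at h₁ h₃ ⊢
  exact Triangle.subsingleton_hom_obj₂ hT h₁ h₃

lemma Pretriangulated.Triangle.bijective_comp_mor₁ (hT : Tr ∈ distTriang C) {W : C}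
    (h₃ : Subsingleton (W ⟶ Tr.obj₃)) (h₃' : Subsingleton (W ⟶ Tr.obj₃⟦(-1 : ℤ)⟧)) :
    Function.Bijective fun f : W ⟶ Tr.obj₁ => f ≫ Tr.mor₁ := by
  refine ⟨(injective_iff_map_eq_zero (Preadditive.rightComp W Tr.mor₁)).2 fun f hf => ?_,
    fun g => ?_⟩
  · obtain ⟨g, rfl⟩ := Tr.invRotate.coyoneda_exact₂ (inv_rot_of_distTriang _ hT) f hf
    rw [show g = 0 from h₃'.elim g 0]
    exact zero_comp
  · obtain ⟨f, rfl⟩ := Tr.coyoneda_exact₂ hT g (Subsingleton.elim _ _)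
    exact ⟨f, rfl⟩

variable {k : Type*} [Field k] [Linear k C]

lemma Pretriangulated.Triangle.exists_eq_smul_id_obj₂ (hT : Tr ∈ distTriang C)
    (h₁₃ : Subsingleton (Tr.obj₁ ⟶ Tr.obj₃)) (h₂₁ : Subsingleton (Tr.obj₂ ⟶ Tr.obj₁))
    (h₃ : ∀ g : Tr.obj₃ ⟶ Tr.obj₃, ∃ c : k, g = c • 𝟙 _) (f : Tr.obj₂ ⟶ Tr.obj₂) :
    ∃ c : k, f = c • 𝟙 _ := by
  obtain ⟨g, hg⟩ := Tr.yoneda_exact₂ hT (f ≫ Tr.mor₂) (Subsingleton.elim _ _)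
  obtain ⟨c, rfl⟩ := h₃ g
  obtain ⟨v, hv⟩ := Tr.coyoneda_exact₂ hT (f - c • 𝟙 _) (by simp [hg])
  exact ⟨c, by rw [← sub_eq_zero, hv, Subsingleton.elim v 0, zero_comp]⟩

end Triangulated

end CategoryTheory

namespace CategoryTheory.UniversalExtension

variable {k : Type*} [Field k] {C : Type*} [Category C] [Preadditive C] [HasShift C ℤ]
  [∀ n : ℤ, (shiftFunctor C n).Additive] [Linear k C] [HasBinaryBiproducts C]
  {B A U : C} {ι : B ⊞ B ⟶ U} {p : U ⟶ A} {δ : A ⟶ (B ⊞ B)⟦(1 : ℤ)⟧} {e₁ e₂ : A ⟶ B⟦(1 : ℤ)⟧}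

lemma eq_zero_of_comp_shift_map_eq_zero (hBend : ∀ f : B ⟶ B, ∃ c : k, f = c • 𝟙 B)
    (hAend : ∀ f : A ⟶ A, ∃ c : k, f = c • 𝟙 A) (hli : LinearIndependent k ![e₁, e₂])
    (hδ₁ : δ ≫ biprod.fst⟦(1 : ℤ)⟧' = e₁) (hδ₂ : δ ≫ biprod.snd⟦(1 : ℤ)⟧' = e₂)
    {h : B ⊞ B ⟶ B} (hh : δ ≫ h⟦(1 : ℤ)⟧' = 0) : h = 0 := by
  obtain ⟨c₁, hc₁⟩ := hBend (biprod.inl ≫ h)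
  obtain ⟨c₂, hc₂⟩ := hBend (biprod.inr ≫ h)
  obtain ⟨ρ₁, hρ₁⟩ := exists_comp_shift_map_smul_id_eq_smul hAend 1 c₁
  obtain ⟨ρ₂, hρ₂⟩ := exists_comp_shift_map_smul_id_eq_smul hAend 1 c₂
  have hsum : ρ₁ • e₁ + ρ₂ • e₂ = 0 := by
    rw [← hρ₁, ← hρ₂, ← hc₁, ← hc₂, ← hδ₁, ← hδ₂, ← hh]
    conv_rhs => rw [← Category.id_comp h, ← biprod.total]
    simp only [Preadditive.add_comp, Functor.map_add, Functor.map_comp, Preadditive.comp_add,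
      Category.assoc]
  obtain ⟨hρ₁₀, hρ₂₀⟩ := LinearIndependent.pair_iff.1 hli ρ₁ ρ₂ hsum
  have hc₁₀ : c₁ = 0 := eq_zero_of_comp_shift_map_smul_id_eq_zero (by simpa using hli.ne_zero 0)
    (by rw [hρ₁, hρ₁₀, zero_smul])
  have hc₂₀ : c₂ = 0 := eq_zero_of_comp_shift_map_smul_id_eq_zero (by simpa using hli.ne_zero 1)
    (by rw [hρ₂, hρ₂₀, zero_smul])
  exact biprod.hom_ext' _ _ (by simp [hc₁, hc₁₀]) (by simp [hc₂, hc₂₀])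

variable [HasZeroObject C] [Pretriangulated C]

lemma comp_eq_zero (htri : Triangle.mk ι p δ ∈ distTriang C)
    (hspan : ∀ f : A ⟶ B⟦(1 : ℤ)⟧, ∃ c : k × k, f = c.1 • e₁ + c.2 • e₂)
    (hδ₁ : δ ≫ biprod.fst⟦(1 : ℤ)⟧' = e₁) (hδ₂ : δ ≫ biprod.snd⟦(1 : ℤ)⟧' = e₂)
    (g : A ⟶ B⟦(1 : ℤ)⟧) : p ≫ g = 0 := by
  obtain ⟨c, rfl⟩ := hspan g
  have : c.1 • e₁ + c.2 • e₂ =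
      δ ≫ (c.1 • biprod.fst⟦(1 : ℤ)⟧' + c.2 • biprod.snd⟦(1 : ℤ)⟧') := by
    simp [Preadditive.comp_add, hδ₁, hδ₂]
  have hpδ : p ≫ δ = 0 := comp_distTriang_mor_zero₂₃ _ htri
  rw [this, ← Category.assoc, hpδ, zero_comp]

lemma subsingleton_hom (htri : Triangle.mk ι p δ ∈ distTriang C)
    (hBend : ∀ f : B ⟶ B, ∃ c : k, f = c • 𝟙 B) (hAend : ∀ f : A ⟶ A, ∃ c : k, f = c • 𝟙 A)
    (hAB : Subsingleton (A ⟶ B)) (hli : LinearIndependent k ![e₁, e₂])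
    (hδ₁ : δ ≫ biprod.fst⟦(1 : ℤ)⟧' = e₁) (hδ₂ : δ ≫ biprod.snd⟦(1 : ℤ)⟧' = e₂) :
    Subsingleton (U ⟶ B) :=
  subsingleton_of_forall_eq 0 fun f => by
    have hδι : δ ≫ ι⟦(1 : ℤ)⟧' = 0 := comp_distTriang_mor_zero₃₁ _ htri
    have hιf : ι ≫ f = 0 := eq_zero_of_comp_shift_map_eq_zero hBend hAend hli hδ₁ hδ₂
      (by rw [Functor.map_comp, ← Category.assoc, hδι, zero_comp])
    obtain ⟨g, rfl⟩ := Triangle.yoneda_exact₂ _ htri f hιf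
    rw [hAB.elim g 0]
    exact comp_zero

lemma subsingleton_hom_shift (htri : Triangle.mk ι p δ ∈ distTriang C)
    (hBend : ∀ f : B ⟶ B, ∃ c : k, f = c • 𝟙 B)
    (hBext : ∀ l : ℤ, l ≠ 0 → Subsingleton (B ⟶ B⟦l⟧))
    (hAend : ∀ f : A ⟶ A, ∃ c : k, f = c • 𝟙 A)
    (hAB : ∀ l : ℤ, l ≠ 1 → Subsingleton (A ⟶ B⟦l⟧))
    (hli : LinearIndependent k ![e₁, e₂])
    (hspan : ∀ f : A ⟶ B⟦(1 : ℤ)⟧, ∃ c : k × k, f = c.1 • e₁ + c.2 • e₂)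
    (hδ₁ : δ ≫ biprod.fst⟦(1 : ℤ)⟧' = e₁) (hδ₂ : δ ≫ biprod.snd⟦(1 : ℤ)⟧' = e₂) (l : ℤ) :
    Subsingleton (U ⟶ B⟦l⟧) := by
  rcases eq_or_ne l 0 with rfl | hl₀
  · rw [subsingleton_hom_shift_zero_iff]
    exact subsingleton_hom htri hBend hAend
      ((subsingleton_hom_shift_zero_iff _ _).1 (hAB 0 zero_ne_one)) hli hδ₁ hδ₂
  rcases eq_or_ne l 1 with rfl | hl₁
  · refine subsingleton_of_forall_eq 0 fun f => ?_
    have hBB := subsingleton_biprod_hom (hBext 1 one_ne_zero) (hBext 1 one_ne_zero)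
    obtain ⟨g, rfl⟩ := Triangle.yoneda_exact₂ _ htri f (hBB.elim _ _)
    exact comp_eq_zero htri hspan hδ₁ hδ₂ g
  exact Triangle.subsingleton_obj₂_hom htri
    (subsingleton_biprod_hom (hBext l hl₀) (hBext l hl₀)) (hAB l hl₁)

lemma finrank_hom (htri : Triangle.mk ι p δ ∈ distTriang C)
    (hBend : ∀ f : B ⟶ B, ∃! c : k, f = c • 𝟙 B) (hBA : ∀ l : ℤ, Subsingleton (B ⟶ A⟦l⟧)) :
    Module.finrank k (B ⟶ U) = 2 := by
  have hB := finrank_end_eq_one hBend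
  have := Module.finite_of_finrank_eq_succ hB
  have hι := Triangle.bijective_comp_mor₁ htri
    ((subsingleton_hom_shift_zero_iff _ _).1 (hBA 0)) (hBA (-1))
  rw [← (LinearEquiv.ofBijective (Linear.rightComp k B ι) hι).finrank_eq,
    Linear.finrank_hom_biprod, hB]

end CategoryTheory.UniversalExtension

/-- `T` stands for `D^b(coh Y)`, `OB` for `O` and `OA` for `O(2,−1)`. -/
theorem universal_extension_is_exceptional
    (k : Type) [Field k]
    (T : Type) [Category T] [Preadditive T] [HasZeroObject T] [HasShift T ℤ]
    [∀ n : ℤ, (shiftFunctor T n).Additive] [Pretriangulated T]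
    [CategoryTheory.Linear k T] [HasBinaryBiproducts T]
    (hfinite : ∀ X Y : T, FiniteDimensional k (X ⟶ Y))
    (OB OA : T)
    -- `(O(2,-1), O)` is an exceptional pair:
    (hBend : ∀ f : OB ⟶ OB, ∃! c : k, f = c • 𝟙 OB)
    (hBext : ∀ l : ℤ, l ≠ 0 → ∀ f : OB ⟶ OB⟦l⟧, f = 0)
    (hAend : ∀ f : OA ⟶ OA, ∃! c : k, f = c • 𝟙 OA)
    (hAext : ∀ l : ℤ, l ≠ 0 → ∀ f : OA ⟶ OA⟦l⟧, f = 0)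
    (hBA : ∀ l : ℤ, ∀ f : OB ⟶ OA⟦l⟧, f = 0)
    (hAB : ∀ l : ℤ, l ≠ 1 → ∀ f : OA ⟶ OB⟦l⟧, f = 0)
    -- `e₁, e₂` is a basis of the 2-dimensional space `Ext^1(O(2,-1), O)`:
    (e₁ e₂ : OA ⟶ OB⟦(1 : ℤ)⟧)
    (hbasis : ∀ f : OA ⟶ OB⟦(1 : ℤ)⟧, ∃! c : k × k, f = c.1 • e₁ + c.2 • e₂)
    -- the universal extension `0 → O^{⊕2} → U → O(2,-1) → 0`:
    (U : T) (ι : OB ⊞ OB ⟶ U) (p : U ⟶ OA) (δ : OA ⟶ (OB ⊞ OB)⟦(1 : ℤ)⟧)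
    (htri : Triangle.mk ι p δ ∈ distTriang T)
    (hδ₁ : δ ≫ (shiftFunctor T (1 : ℤ)).map biprod.fst = e₁)
    (hδ₂ : δ ≫ (shiftFunctor T (1 : ℤ)).map biprod.snd = e₂)
    -- the rank function:
    (rk : T → ℤ)
    (hrk : ∀ Tr : Triangle T, (Tr ∈ distTriang T) → rk Tr.obj₂ = rk Tr.obj₁ + rk Tr.obj₃)
    (hrkB : rk OB = 1) (hrkA : rk OA = 1) :
    -- `U` is exceptional of rank 3:
    (∀ f : U ⟶ U, ∃! c : k, f = c • 𝟙 U) ∧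
    (∀ l : ℤ, l ≠ 0 → ∀ f : U ⟶ U⟦l⟧, f = 0) ∧
    rk U = 3 ∧
    -- `(O, U)` is a strong exceptional pair with `Hom(O, U)` two-dimensional:
    (∀ l : ℤ, ∀ f : U ⟶ OB⟦l⟧, f = 0) ∧
    (∀ l : ℤ, l ≠ 0 → ∀ f : OB ⟶ U⟦l⟧, f = 0) ∧
    Module.finrank k (OB ⟶ U) = 2 := by
  have hBext' l hl := subsingleton_of_forall_eq 0 (hBext l hl)
  have hAext' l hl := subsingleton_of_forall_eq 0 (hAext l hl)
  have hBA' l := subsingleton_of_forall_eq 0 (hBA l)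
  have hAB' l hl := subsingleton_of_forall_eq 0 (hAB l hl)
  have hUB := UniversalExtension.subsingleton_hom_shift htri (fun f => (hBend f).exists) hBext'
    (fun f => (hAend f).exists) hAB' (LinearIndependent.pair_of_existsUnique hbasis)
    (fun f => (hbasis f).exists) hδ₁ hδ₂
  have hBU l hl : Subsingleton (OB ⟶ U⟦l⟧) := Triangle.subsingleton_hom_shift_obj₂ htri
    (subsingleton_hom_shift_biprod (hBext' l hl) (hBext' l hl)) (hBA' l)
  have hUA l hl : Subsingleton (U ⟶ OA⟦l⟧) := Triangle.subsingleton_obj₂_hom htri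
    (subsingleton_biprod_hom (hBA' l) (hBA' l)) (hAext' l hl)
  have hUU l hl : Subsingleton (U ⟶ U⟦l⟧) := Triangle.subsingleton_hom_shift_obj₂ htri
    (subsingleton_hom_shift_biprod (hUB l) (hUB l)) (hUA l hl)
  have hfr := UniversalExtension.finrank_hom htri hBend hBA'
  have hU : 𝟙 U ≠ 0 := fun h => by
    have : Subsingleton (OB ⟶ U) := ⟨((IsZero.iff_id_eq_zero U).2 h).eq_of_tgt⟩
    simp [Module.finrank_zero_of_subsingleton] at hfr
  refine ⟨fun f => ?_, fun l hl f => (hUU l hl).elim f 0, ?_, fun l f => (hUB l).elim f 0,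
    fun l hl f => (hBU l hl).elim f 0, hfr⟩
  · have hBA₀ := (subsingleton_hom_shift_zero_iff _ _).1 (hBA' 0)
    have hUB₀ := (subsingleton_hom_shift_zero_iff _ _).1 (hUB 0)
    obtain ⟨c, hc⟩ := Triangle.exists_eq_smul_id_obj₂ htri (subsingleton_biprod_hom hBA₀ hBA₀)
      (subsingleton_hom_biprod hUB₀ hUB₀) (fun g => (hAend g).exists) f
    exact ⟨c, hc, fun c' hc' => smul_left_injective k hU (hc'.symm.trans hc)⟩
  · have hrkU : rk U = rk (OB ⊞ OB) + rk OA := hrk _ htri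
    have hrkBB : rk (OB ⊞ OB) = rk OB + rk OB :=
      hrk _ (binaryBiproductTriangle_distinguished OB OB)
    omega
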